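/- Let X be a complex Banach space and L(X) the Banach algebra of bounded linear operators on X. Suppose A, D ∈ L(X) have Hirano inverses and let A^H denote the Hirano inverse of A. If CB = 0, CA = 0 and A^H B C = 0, then the operator matrix M = [[A, B], [C, D]] has a Hirano inverse in M₂(L(X)). -/

import Mathlib

/-!
An element `a` of a ring has a Hirano inverse iff `a - a³` is nilpotent. Both sides can be
checked in a commutative subring containing `a` (and the candidate inverse), and there one works
modulo the nilradical: `a = a³` makes `a²` idempotent, and a lift `e` of it gives the inverse
`a e (1 + (a² - e) e)⁻¹`.

For `M = [[A, B], [C, D]]` write `M = P + Q` with `P = [[A, B], [0, D]]` and `Q = [[0, 0], [C, 0]]`.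
Since `CA = CB = 0` we get `QP = 0 = Q²`, so `M - M³ = (P - P³) + (1 - P²) Q`, where `P - P³` is
upper triangular with nilpotent diagonal `A - A³`, `D - D³`, and the second summand squares to zero
and kills `P - P³` from the left.
-/

/-- `a` has a Hirano inverse: there exists `z` with `az = za`, `z = zaz`,
and `a^2 - az` nilpotent. -/
def HasHiranoInverse {R : Type*} [Ring R] (a : R) : Prop :=
  ∃ z : R, a * z = z * a ∧ z = z * a * z ∧ IsNilpotent (a ^ 2 - a * z)

/-- `a` has a strongly Drazin inverse: there exists `z` with `az = za`, `z = zaz`,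
and `a - az` nilpotent. -/
def HasStronglyDrazinInverse {R : Type*} [Ring R] (a : R) : Prop :=
  ∃ z : R, a * z = z * a ∧ z = z * a * z ∧ IsNilpotent (a - a * z)

section Nilpotent

variable {R : Type*} [Ring R]

theorem isNilpotent_add_of_mul_eq_zero_of_mul_self_eq_zero {x y : R} (hyx : y * x = 0)
    (hyy : y * y = 0) (hx : IsNilpotent x) : IsNilpotent (x + y) := by
  have hpow : ∀ n : ℕ, (x + y) ^ (n + 1) = x ^ (n + 1) + x ^ n * y := by
    intro n
    induction n with
    | zero => simp
    | succ n ih =>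
      calc (x + y) ^ (n + 2) = (x ^ (n + 1) + x ^ n * y) * (x + y) := by rw [pow_succ, ih]
        _ = x ^ (n + 2) + x ^ (n + 1) * y + x ^ n * (y * x) + x ^ n * (y * y) := by noncomm_ring
        _ = x ^ (n + 2) + x ^ (n + 1) * y := by rw [hyx, hyy, mul_zero, add_zero, add_zero]
  obtain ⟨n, hn⟩ := hx
  exact ⟨n + 1, by rw [hpow, pow_succ, hn, zero_mul, zero_mul, add_zero]⟩

theorem isNilpotent_add_sub_pow_three {p q : R} (hqp : q * p = 0) (hqq : q * q = 0)
    (hp : IsNilpotent (p - p ^ 3)) : IsNilpotent (p + q - (p + q) ^ 3) := by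
  have hcube : (p + q) ^ 3 = p ^ 3 + p ^ 2 * q := by
    simp only [pow_succ, pow_zero, one_mul, add_mul, mul_add, mul_assoc, hqp, hqq]
    simp
  have hsplit : p + q - (p + q) ^ 3 = (p - p ^ 3) + (1 - p ^ 2) * q := by
    rw [hcube]; noncomm_ring
  have hq : q * (1 - p ^ 2) = q := by rw [mul_sub, pow_two, ← mul_assoc, hqp]; simp
  rw [hsplit]
  refine isNilpotent_add_of_mul_eq_zero_of_mul_self_eq_zero ?_ ?_ hp
  · rw [mul_assoc, mul_sub, pow_succ' p 2, ← mul_assoc q, hqp, zero_mul, sub_self, mul_zero]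
  · rw [mul_assoc, ← mul_assoc q, hq, hqq, mul_zero]

namespace Matrix

theorem exists_fin_two_upper_pow (a b d : R) (k : ℕ) :
    ∃ c, !![a, b; 0, d] ^ k = !![a ^ k, c; 0, d ^ k] := by
  induction k with
  | zero => exact ⟨0, by rw [pow_zero, one_fin_two, pow_zero, pow_zero]⟩
  | succ k ih =>
    obtain ⟨c, hc⟩ := ih
    exact ⟨a ^ k * b + c * d, by rw [pow_succ, hc, mul_fin_two]; simp [pow_succ]⟩

theorem isNilpotent_fin_two_upper {a d : R} (b : R) (ha : IsNilpotent a) (hd : IsNilpotent d) :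
    IsNilpotent !![a, b; 0, d] := by
  obtain ⟨m, hm⟩ := ha
  obtain ⟨n, hn⟩ := hd
  obtain ⟨c, hc⟩ := exists_fin_two_upper_pow a b d m
  obtain ⟨c', hc'⟩ := exists_fin_two_upper_pow a b d n
  refine ⟨m + n, ?_⟩
  rw [pow_add, hc, hc', hm, hn]
  ext i j
  fin_cases i <;> fin_cases j <;> simp

theorem isNilpotent_fin_two_sub_pow_three {a b c d : R} (ha : IsNilpotent (a - a ^ 3))
    (hd : IsNilpotent (d - d ^ 3)) (hcb : c * b = 0) (hca : c * a = 0) :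
    IsNilpotent (!![a, b; c, d] - !![a, b; c, d] ^ 3) := by
  have hsplit : !![a, b; c, d] = !![a, b; 0, d] + !![0, 0; c, 0] := by simp
  obtain ⟨e, he⟩ := exists_fin_two_upper_pow a b d 3
  rw [hsplit]
  refine isNilpotent_add_sub_pow_three ?_ ?_ ?_
  · ext i j
    fin_cases i <;> fin_cases j <;> simp [hca, hcb]
  · ext i j
    fin_cases i <;> fin_cases j <;> simp
  · rw [he]
    simpa using isNilpotent_fin_two_upper (b - e) ha hd

end Matrix

end Nilpotent

section Hirano

variable {R : Type*}

theorem HasHiranoInverse.map {S F : Type*} [Ring R] [Ring S] [FunLike F R S] [RingHomClass F R S]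
    (f : F) {a : R} (h : HasHiranoInverse a) : HasHiranoInverse (f a) := by
  obtain ⟨z, hcomm, hz, hnil⟩ := h
  refine ⟨f z, ?_, ?_, ?_⟩
  · rw [← map_mul, hcomm, map_mul]
  · rw [← map_mul, ← map_mul, ← hz]
  · simpa only [map_sub, map_pow, map_mul] using hnil.map f

section CommRing

variable [CommRing R] {a : R}

theorem isNilpotent_sub_pow_three_of_hasHiranoInverse_comm (h : HasHiranoInverse a) :
    IsNilpotent (a - a ^ 3) := by
  obtain ⟨z, -, hz, hnil⟩ := h
  -- `e = a z` is idempotent and `a² = e + w`, so `a² (1 - a²)² = e w² + w (1 - a²)²`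
  have key : (a - a ^ 3) ^ 2 = (a ^ 2 - a * z) * (a * z * (a ^ 2 - a * z) + (1 - a ^ 2) ^ 2) := by
    linear_combination (a * (1 - 2 * a ^ 2 + a * z)) * hz
  exact .of_pow (m := 2) (key ▸ (Commute.all _ _).isNilpotent_mul_right hnil)

theorem hasHiranoInverse_of_isNilpotent_sub_pow_three_comm (h : IsNilpotent (a - a ^ 3)) :
    HasHiranoInverse a := by
  let f := Ideal.Quotient.mk (nilradical R)
  have hf : ∀ x, f x = 0 ↔ IsNilpotent x := fun x => by
    rw [Ideal.Quotient.eq_zero_iff_mem, mem_nilradical]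
  have hcube : f a ^ 3 = f a := by
    rw [← map_pow, eq_comm, ← sub_eq_zero, ← map_sub, hf]; exact h
  have hidem : IsIdempotentElem (f (a ^ 2)) := by
    rw [IsIdempotentElem, map_pow, ← pow_add, pow_succ, hcube]; ring
  obtain ⟨e, he, hfe⟩ := exists_isIdempotentElem_eq_of_ker_isNilpotent f
    (fun x hx => (hf x).mp hx) _ ⟨_, rfl⟩ hidem
  have hae : IsNilpotent (a ^ 2 - e) := by rw [← hf, map_sub, hfe, sub_self]
  obtain ⟨v, hv⟩ : IsUnit (1 + (a ^ 2 - e) * e) :=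
    ((Commute.all _ _).isNilpotent_mul_right hae).isUnit_one_add
  have hinv : a ^ 2 * e * ↑v⁻¹ = e := by
    have := v.inv_mul
    rw [hv] at this
    linear_combination e * this + (-(a ^ 2 * ↑v⁻¹) + ↑v⁻¹ * (e + 1)) * he.eq
  refine ⟨a * e * ↑v⁻¹, mul_comm _ _, ?_, ?_⟩
  · linear_combination (-(a * e * ↑v⁻¹)) * hinv - (a * ↑v⁻¹) * he.eq
  · rwa [← mul_assoc, ← mul_assoc, ← pow_two, hinv]

end CommRing

open scoped IsMulCommutative in
theorem hasHiranoInverse_iff_isNilpotent_sub_pow_three [Ring R] {a : R} :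
    HasHiranoInverse a ↔ IsNilpotent (a - a ^ 3) := by
  constructor
  · rintro ⟨z, hcomm, hz, hnil⟩
    let S := Subring.closure ({a, z} : Set R)
    have : IsMulCommutative S := Subring.isMulCommutative_closure <| by
      rintro x (rfl | rfl) y (rfl | rfl) <;> simp [hcomm]
    let a' : S := ⟨a, Subring.subset_closure (by simp)⟩
    let z' : S := ⟨z, Subring.subset_closure (by simp)⟩
    have : HasHiranoInverse a' := ⟨z', Subtype.ext hcomm, Subtype.ext hz,
      (IsNilpotent.map_iff (f := S.subtype) Subtype.val_injective).mp hnil⟩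
    exact (isNilpotent_sub_pow_three_of_hasHiranoInverse_comm this).map S.subtype
  · intro h
    let S := Subring.closure ({a} : Set R)
    have : IsMulCommutative S := Subring.isMulCommutative_closure (by simp)
    let a' : S := ⟨a, Subring.subset_closure rfl⟩
    exact (hasHiranoInverse_of_isNilpotent_sub_pow_three_comm (a := a')
      ((IsNilpotent.map_iff (f := S.subtype) Subtype.val_injective).mp h)).map S.subtype

end Hirano

variable {X : Type*} [NormedAddCommGroup X] [NormedSpace ℂ X] [CompleteSpace X]

theorem hirano_matrix_cor38_general (A B C D AH : X →L[ℂ] X)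
    (hAH : A * AH = AH * A ∧ AH = AH * A * AH ∧ IsNilpotent (A ^ 2 - A * AH))
    (hD : HasHiranoInverse D)
    (h1 : C * B = 0)
    (h2 : C * A = 0) :
    HasHiranoInverse (!![A, B; C, D] : Matrix (Fin 2) (Fin 2) (X →L[ℂ] X)) := by
  rw [hasHiranoInverse_iff_isNilpotent_sub_pow_three] at hD ⊢
  exact Matrix.isNilpotent_fin_two_sub_pow_three
    (hasHiranoInverse_iff_isNilpotent_sub_pow_three.mp ⟨AH, hAH⟩) hD h1 h2

theorem hirano_matrix_cor38 (A B C D AH : X →L[ℂ] X)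
    (hAH : A * AH = AH * A ∧ AH = AH * A * AH ∧ IsNilpotent (A ^ 2 - A * AH))
    (hD : HasHiranoInverse D)
    (h1 : C * B = 0)
    (h2 : C * A = 0)
    (h3 : AH * B * C = 0) :
    HasHiranoInverse (!![A, B; C, D] : Matrix (Fin 2) (Fin 2) (X →L[ℂ] X)) :=
  hirano_matrix_cor38_general A B C D AH hAH hD h1 h2
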